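/- Let G(p) be a chordal bar framework on n vertices in general position in R^r with r̄ = n−r−1 ≥ 1, and assume that 1,2,...,n is a perfect elimination ordering of G. If G is (r+1)-vertex connected, then G(p) admits a Gale matrix Z that satisfies Property (A). -/

import Mathlib

open Matrix
open scoped Classical

noncomputable section

/-- The configuration `p` affinely spans `ℝ^r`. -/
def AffinelySpans {n r : ℕ} (p : Fin n → EuclideanSpace ℝ (Fin r)) : Prop :=
  affineSpan ℝ (Set.range p) = ⊤

/-- The configuration `p` is in general position in `ℝ^r`: every `r+1` of the
points are affinely independent. -/
def InGeneralPosition {n r : ℕ} (p : Fin n → EuclideanSpace ℝ (Fin r)) : Prop :=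
  ∀ s : Finset (Fin n), s.card = r + 1 →
    AffineIndependent ℝ (fun i : s => p (i : Fin n))

/-- Frameworks `G(p)` and `G(q)` are equivalent: corresponding edges have equal lengths. -/
def FrameworksEquivalent {n r s : ℕ} (G : SimpleGraph (Fin n))
    (p : Fin n → EuclideanSpace ℝ (Fin r)) (q : Fin n → EuclideanSpace ℝ (Fin s)) : Prop :=
  ∀ i j : Fin n, G.Adj i j → ‖q i - q j‖ = ‖p i - p j‖

/-- Frameworks `G(p)` and `G(q)` are congruent: all pairwise distances agree. -/
def FrameworksCongruent {n r s : ℕ}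
    (p : Fin n → EuclideanSpace ℝ (Fin r)) (q : Fin n → EuclideanSpace ℝ (Fin s)) : Prop :=
  ∀ i j : Fin n, ‖q i - q j‖ = ‖p i - p j‖

/-- `G(p)` is universally rigid. -/
def UniversallyRigid {n r : ℕ} (G : SimpleGraph (Fin n))
    (p : Fin n → EuclideanSpace ℝ (Fin r)) : Prop :=
  ∀ (s : ℕ) (q : Fin n → EuclideanSpace ℝ (Fin s)),
    FrameworksEquivalent G p q → FrameworksCongruent p q

/-- `G(p)` is globally rigid. -/
def GloballyRigid {n r : ℕ} (G : SimpleGraph (Fin n))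
    (p : Fin n → EuclideanSpace ℝ (Fin r)) : Prop :=
  ∀ q : Fin n → EuclideanSpace ℝ (Fin r),
    FrameworksEquivalent G p q → FrameworksCongruent p q

/-- `ω` is an equilibrium stress of `G(p)`. -/
def IsEquilibriumStress {n r : ℕ} (G : SimpleGraph (Fin n))
    (p : Fin n → EuclideanSpace ℝ (Fin r)) (ω : Fin n → Fin n → ℝ) : Prop :=
  (∀ i j, ω i j = ω j i) ∧
  ∀ i : Fin n, ∑ j ∈ Finset.univ.filter (fun j => G.Adj i j), ω i j • (p i - p j) = 0

/-- `S` is the stress matrix of `G(p)` associated to some equilibrium stress `ω`. -/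
def IsStressMatrix {n r : ℕ} (G : SimpleGraph (Fin n))
    (p : Fin n → EuclideanSpace ℝ (Fin r)) (S : Matrix (Fin n) (Fin n) ℝ) : Prop :=
  ∃ ω : Fin n → Fin n → ℝ, IsEquilibriumStress G p ω ∧
    (∀ i j : Fin n, G.Adj i j → S i j = - ω i j) ∧
    (∀ i j : Fin n, i ≠ j → ¬ G.Adj i j → S i j = 0) ∧
    (∀ i : Fin n, S i i = ∑ j ∈ Finset.univ.filter (fun j => G.Adj i j), ω i j)

/-- `G` is `k`-vertex connected: either `G` is the complete graph on `k+1` vertices, or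
`n ≥ k+2` and the deletion of any `k-1` vertices leaves `G` connected. -/
def IsKVertexConnected {n : ℕ} (k : ℕ) (G : SimpleGraph (Fin n)) : Prop :=
  (n = k + 1 ∧ G = ⊤) ∨
  (k + 2 ≤ n ∧ ∀ X : Finset (Fin n), X.card = k - 1 →
    (G.induce ((X : Set (Fin n))ᶜ)).Connected)

/-- `G` is chordal: every cycle of length at least 4 has a chord, i.e. an edge of `G`
joining two vertices of the cycle which is not an edge of the cycle. -/
def IsChordal {V : Type*} (G : SimpleGraph V) : Prop :=
  ∀ (v : V) (c : G.Walk v v), c.IsCycle → 4 ≤ c.length →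
    ∃ u w : V, u ∈ c.support ∧ w ∈ c.support ∧ G.Adj u w ∧ s(u, w) ∉ c.edges

/-- The natural ordering `1, 2, ..., n` (i.e. the order on `Fin n`) is a perfect
elimination ordering of `G`: the higher-indexed neighbours of each vertex form a clique. -/
def IsNatPEO {n : ℕ} (G : SimpleGraph (Fin n)) : Prop :=
  ∀ i j k : Fin n, i < j → i < k → j ≠ k → G.Adj i j → G.Adj i k → G.Adj j k

/-- The extended configuration matrix `𝒫` of `G(p)`: its `j`-th column is `(pʲ ; 1)`. -/
def extConfig {n r : ℕ} (p : Fin n → EuclideanSpace ℝ (Fin r)) :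
    Matrix (Fin (r + 1)) (Fin n) ℝ :=
  fun i j => if h : (i : ℕ) < r then p j ⟨(i : ℕ), h⟩ else 1

/-- `Z` is a Gale matrix of `G(p)`: its columns form a basis of the null space of the
extended configuration matrix of `G(p)`. -/
def IsGaleMatrix {n r : ℕ} (p : Fin n → EuclideanSpace ℝ (Fin r))
    (Z : Matrix (Fin n) (Fin (n - r - 1)) ℝ) : Prop :=
  extConfig p * Z = 0 ∧
  LinearIndependent ℝ (fun k : Fin (n - r - 1) => Zᵀ k) ∧
  ∀ x : Fin n → ℝ, extConfig p *ᵥ x = 0 →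
    x ∈ Submodule.span ℝ (Set.range fun k : Fin (n - r - 1) => Zᵀ k)

/-- Property (A) of a Gale matrix `Z` (with respect to the PEO `1, 2, ..., n` of `G`):
`z_ii = 1` for `i ≤ n-r-1`, `z_ij = 0` for `i < j`, and `z_ij = 0` whenever `i > j` and
`(i,j)` is not an edge of `G`. -/
def PropertyA {n r : ℕ} (G : SimpleGraph (Fin n))
    (Z : Matrix (Fin n) (Fin (n - r - 1)) ℝ) : Prop :=
  (∀ (i : Fin n) (h : (i : ℕ) < n - r - 1), Z i ⟨(i : ℕ), h⟩ = 1) ∧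
  (∀ (i : Fin n) (j : Fin (n - r - 1)), (i : ℕ) < (j : ℕ) → Z i j = 0) ∧
  (∀ (i : Fin n) (j : Fin (n - r - 1)), (j : ℕ) < (i : ℕ) →
    ¬ G.Adj i (Fin.castLE (by omega) j) → Z i j = 0)

/-- A symmetric matrix of rank `k` has generic rank profile if its first `k` leading
principal minors are nonzero. -/
def HasGenericRankProfile {n : ℕ} (A : Matrix (Fin n) (Fin n) ℝ) (k : ℕ) : Prop :=
  ∀ t : ℕ, 0 < t → t ≤ k → ∀ h : t ≤ n,
    (A.submatrix (Fin.castLE h) (Fin.castLE h)).det ≠ 0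


/-- `G` is an `(r+1)`-lateration graph: there is an ordering `v 0, ..., v (n-1)` of the
vertices such that the first `r+2` vertices induce a clique and every later vertex is
adjacent to at least `r+1` of the preceding vertices. -/
def IsLaterationGraph {n : ℕ} (r : ℕ) (G : SimpleGraph (Fin n)) : Prop :=
  ∃ v : Fin n ≃ Fin n,
    (∀ i j : Fin n, (i : ℕ) < r + 2 → (j : ℕ) < r + 2 → i ≠ j → G.Adj (v i) (v j)) ∧
    ∀ j : Fin n, r + 2 ≤ (j : ℕ) →
      r + 1 ≤ (Finset.univ.filter fun i : Fin n =>
        (i : ℕ) < (j : ℕ) ∧ G.Adj (v i) (v j)).card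

/-- `gaussElim A t` is the matrix obtained from `A` after `t` steps of Gauss elimination
(the `t`-th step zeroes out the entries below the pivot in position `(t,t)`,
1-indexed, and normalizes the pivot row). -/
def gaussElim {n : ℕ} (A : Matrix (Fin n) (Fin n) ℝ) : ℕ → Matrix (Fin n) (Fin n) ℝ
  | 0 => A
  | t + 1 =>
    let B := gaussElim A t
    if h : t < n then
      let piv : Fin n := ⟨t, h⟩
      fun i j =>
        if (i : ℕ) < t then B i j
        else if (i : ℕ) = t then B i j / B piv piv
        else if (j : ℕ) ≤ t then 0
        else B i j - B i piv * B piv j / B piv piv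
    else B

/-!
In a perfect elimination ordering a lowest interior vertex of a walk can be bypassed, since its
two walk-neighbours are higher neighbours of it and hence adjacent. So two vertices above `j`
that are joined by a walk are joined by one staying above `j`, whose first step from `j` goes to
a higher neighbour; thus the higher neighbours of `j` separate `j` from the later vertices, and
`(r+1)`-connectivity gives every `j < n - r - 1` at least `r + 1` of them. By general position
`p j` is an affine combination of `r + 1` of these, which yields a kernel vector of the extended
configuration matrix supported on `j` and its higher neighbours, with entry `1` at `j`. These
`n - r - 1` columns are unitriangular, hence independent, and the kernel has exactly this
dimension because the points affinely span `ℝ^r`.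
-/

def upperNeighborFinset {n : ℕ} (G : SimpleGraph (Fin n)) (j : Fin n) : Finset (Fin n) :=
  {i | j < i ∧ G.Adj j i}

namespace IsNatPEO

variable {n : ℕ} {G : SimpleGraph (Fin n)}

lemma exists_walk_notMem_support_tail (hpeo : IsNatPEO G) {m : Fin n} :
    ∀ {a b : Fin n} (W : G.Walk a b), (∀ u ∈ W.support, m ≤ u) → b ≠ m →
      ∃ W' : G.Walk a b, W'.support ⊆ W.support ∧ m ∉ W'.support.tail
  | _, _, .nil, _, _ => ⟨.nil, List.Subset.refl _, by simp⟩
  | a, _, .cons (v := c) hac W, hmin, hb => by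
    obtain ⟨W₀, hsub, hm⟩ :=
      exists_walk_notMem_support_tail hpeo W (fun u hu => hmin u (by simp [hu])) hb
    have hsub' : W₀.support ⊆ (SimpleGraph.Walk.cons hac W).support :=
      List.Subset.trans hsub (by simp)
    by_cases hc : c = m
    · subst hc
      cases W₀ with
      | nil => exact absurd rfl hb
      | @cons _ d _ hcd W₁ =>
        have hW₁ : W₁.support ⊆ (SimpleGraph.Walk.cons hac W).support :=
          List.Subset.trans (List.subset_cons_self _ _) hsub'
        have hma : c < a := (hmin a (by simp)).lt_of_ne (G.ne_of_adj hac).symm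
        have hmd : c < d := (hmin d (hsub' (by simp))).lt_of_ne (G.ne_of_adj hcd)
        by_cases had : a = d
        · subst had
          exact ⟨W₁, hW₁, fun h => hm (by simpa using W₁.support.mem_of_mem_tail h)⟩
        · refine ⟨.cons (hpeo c a d hma hmd had hac.symm hcd) W₁, ?_, by simpa using hm⟩
          simpa using hW₁
    · refine ⟨.cons hac W₀, List.cons_subset_cons _ hsub, ?_⟩
      rw [SimpleGraph.Walk.support_cons, List.tail_cons, ← W₀.cons_tail_support]
      exact fun h => (List.mem_cons.mp h).elim (fun h => hc h.symm) hm

lemma exists_walk_support_subset_forall_le (hpeo : IsNatPEO G) {t a b : Fin n}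
    (W : G.Walk a b) (ha : t ≤ a) (hb : t ≤ b) :
    ∃ W' : G.Walk a b, W'.support ⊆ W.support ∧ ∀ u ∈ W'.support, t ≤ u := by
  induction hW : W.support.toFinset.card using Nat.strong_induction_on generalizing W with
  | _ k ih =>
    obtain ⟨m, hmW, hmin⟩ := W.support.toFinset.exists_min_image id ⟨a, by simp⟩
    simp only [List.mem_toFinset, id] at hmW hmin
    by_cases htm : t ≤ m
    · exact ⟨W, List.Subset.refl _, fun u hu => htm.trans (hmin u hu)⟩
    have ham : a ≠ m := by rintro rfl; exact htm ha
    obtain ⟨W₁, hsub, hm⟩ :=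
      exists_walk_notMem_support_tail hpeo W hmin (by rintro rfl; exact htm hb)
    have hm₁ : m ∉ W₁.support := by
      rw [← W₁.cons_tail_support]
      exact fun h => (List.mem_cons.mp h).elim (fun h => ham h.symm) hm
    have hcard : W₁.support.toFinset.card < k := by
      rw [← hW]
      refine Finset.card_lt_card ((Finset.ssubset_iff_of_subset fun u => ?_).mpr
        ⟨m, by simpa using hmW, by simpa using hm₁⟩)
      simpa using @hsub u
    obtain ⟨W', hsub', hle⟩ := ih _ hcard W₁ rfl
    exact ⟨W', List.Subset.trans hsub' hsub, hle⟩

lemma not_reachable_induce_compl (hpeo : IsNatPEO G) {j w : Fin n} (hjw : j < w)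
    {X : Set (Fin n)} (hX : ∀ i, j < i → G.Adj j i → i ∈ X) (hj : j ∉ X) (hw : w ∉ X) :
    ¬ (G.induce Xᶜ).Reachable ⟨j, hj⟩ ⟨w, hw⟩ := by
  rintro ⟨W⟩
  let W₀ : G.Walk j w := W.map (SimpleGraph.Embedding.induce Xᶜ).toHom
  have hW₀ : ∀ u ∈ W₀.support, u ∉ X := by
    intro u hu
    obtain ⟨⟨u, hX⟩, -, rfl⟩ := List.mem_map.mp (W.support_map _ ▸ hu)
    exact hX
  obtain ⟨W', hsub, hle⟩ := hpeo.exists_walk_support_subset_forall_le W₀ le_rfl hjw.le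
  cases W' with
  | nil => exact hjw.ne rfl
  | @cons _ v _ hjv _ =>
    have hv : v ∈ W₀.support := hsub (by simp)
    exact hW₀ v hv (hX v ((hle v (by simp)).lt_of_ne (G.ne_of_adj hjv)) hjv)

lemma le_card_upperNeighborFinset (hpeo : IsNatPEO G) {k : ℕ} (hcon : IsKVertexConnected k G)
    {j : Fin n} (hj : k ≤ (Finset.Ioi j).card) : k ≤ (upperNeighborFinset G j).card := by
  have hsub : upperNeighborFinset G j ⊆ Finset.Ioi j := fun i hi => by
    simpa using (Finset.mem_filter.mp hi).2.1
  rcases hcon with ⟨-, rfl⟩ | ⟨-, hconn⟩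
  · refine hj.trans (Finset.card_le_card fun i hi => ?_)
    simpa [upperNeighborFinset] using ⟨Finset.mem_Ioi.mp hi, (Finset.mem_Ioi.mp hi).ne⟩
  by_contra! hlt
  obtain ⟨X, hNX, hXI, hX⟩ :=
    Finset.exists_subsuperset_card_eq hsub (by omega) (by omega : k - 1 ≤ _)
  obtain ⟨w, hw, hwX⟩ :=
    Finset.exists_mem_notMem_of_card_lt_card (s := X) (t := Finset.Ioi j) (by omega)
  have hjX : j ∉ (X : Set (Fin n)) := fun h => lt_irrefl j (Finset.mem_Ioi.mp (hXI h))
  exact not_reachable_induce_compl hpeo (Finset.mem_Ioi.mp hw)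
    (fun i hji hadj => hNX (by simp [upperNeighborFinset, hji, hadj])) hjX hwX
    ((hconn X hX).preconnected _ _)

end IsNatPEO

variable {n r : ℕ}

lemma extConfig_mulVec_eq_zero_iff (p : Fin n → EuclideanSpace ℝ (Fin r)) (x : Fin n → ℝ) :
    extConfig p *ᵥ x = 0 ↔ ∑ i, x i • p i = 0 ∧ ∑ i, x i = 0 := by
  rw [funext_iff, Fin.forall_fin_succ', PiLp.ext_iff]
  simp [extConfig, Matrix.mulVec, dotProduct, mul_comm]

lemma InGeneralPosition.exists_mulVec_extConfig_eq_zero {p : Fin n → EuclideanSpace ℝ (Fin r)}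
    (hgp : InGeneralPosition p) {T : Finset (Fin n)} (hT : r + 1 ≤ T.card) {j : Fin n}
    (hj : j ∉ T) :
    ∃ z : Fin n → ℝ,
      extConfig p *ᵥ z = 0 ∧ z j = 1 ∧ ∀ i ∉ insert j T, z i = 0 := by
  obtain ⟨S, hST, hS⟩ := Finset.exists_subset_card_eq hT
  have hjS : j ∉ S := fun h => hj (hST h)
  have hind := hgp S hS
  have hspan : affineSpan ℝ (Set.range fun i : S => p i) = ⊤ := by
    rw [hind.affineSpan_eq_top_iff_card_eq_finrank_add_one]
    simp [hS]
  let b : AffineBasis S ℝ (EuclideanSpace ℝ (Fin r)) := ⟨fun i => p i, hind, hspan⟩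
  let c : Fin n → ℝ := fun i => if h : i ∈ S then b.coord ⟨i, h⟩ (p j) else 0
  have hc (M : Type) [AddCommGroup M] [Module ℝ M] (f : Fin n → M) :
      ∑ i, c i • f i = ∑ i : S, b.coord i (p j) • f i :=
    calc ∑ i, c i • f i = ∑ i ∈ S, c i • f i :=
          (Finset.sum_subset S.subset_univ fun i _ hi => by simp [c, hi]).symm
      _ = ∑ i : S, b.coord i (p j) • f i :=
          (Finset.sum_coe_sort S _).symm.trans (Finset.sum_congr rfl fun i _ => by simp [c])
  refine ⟨Pi.single j 1 - c, ?_, by simp [c, hjS], fun i hi => ?_⟩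
  · rw [extConfig_mulVec_eq_zero_iff]
    have hcp : ∑ i, c i • p i = p j := (hc _ p).trans (b.linear_combination_coord_eq_self (p j))
    have hc1 : ∑ i, c i = 1 := by
      simpa using (hc ℝ 1).trans (by simpa using b.sum_coord_apply_eq_one (p j))
    simp [sub_smul, Finset.sum_sub_distrib, Pi.single_apply, hcp, hc1]
  · simp only [Finset.mem_insert, not_or] at hi
    have hiS : i ∉ S := fun h => hi.2 (hST h)
    simp [c, hi.1, hiS]

lemma AffinelySpans.ker_mulVecLin_transpose_extConfig {p : Fin n → EuclideanSpace ℝ (Fin r)}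
    (hspan : AffinelySpans p) : LinearMap.ker (extConfig p)ᵀ.mulVecLin = ⊥ := by
  rw [LinearMap.ker_eq_bot']
  intro y hy
  -- `y` is an affine function vanishing on the points, hence everywhere
  let f : EuclideanSpace ℝ (Fin r) →ᵃ[ℝ] ℝ :=
    (∑ b : Fin r, y b.castSucc •
        (EuclideanSpace.proj b : EuclideanSpace ℝ (Fin r) →L[ℝ] ℝ)).toLinearMap.toAffineMap +
      AffineMap.const ℝ _ (y (Fin.last r))
  have hf : f = 0 := AffineMap.ext_on hspan (g := 0) (by
    rintro _ ⟨i, rfl⟩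
    have := congrFun hy i
    simp only [Matrix.mulVecLin_apply, Matrix.mulVec_transpose, Pi.zero_apply] at this
    simpa [f, Matrix.vecMul, dotProduct, Fin.sum_univ_castSucc, extConfig] using this)
  have hlast : y (Fin.last r) = 0 := by simpa [f] using congrArg (· 0) hf
  funext a
  induction a using Fin.lastCases with
  | last => exact hlast
  | cast b =>
    simpa [f, hlast, Pi.single_apply] using congrArg (· (EuclideanSpace.single b 1)) hf

lemma AffinelySpans.finrank_ker_mulVecLin_extConfig {p : Fin n → EuclideanSpace ℝ (Fin r)}
    (hspan : AffinelySpans p) :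
    Module.finrank ℝ (LinearMap.ker (extConfig p).mulVecLin) = n - r - 1 := by
  have hrank : (extConfig p).rank = r + 1 := by
    rw [← Matrix.rank_transpose, Matrix.rank, LinearMap.finrank_range_of_inj
      (LinearMap.ker_eq_bot.mp hspan.ker_mulVecLin_transpose_extConfig)]
    simp
  have := (extConfig p).mulVecLin.finrank_range_add_finrank_ker
  rw [← Matrix.rank, hrank, Module.finrank_fin_fun] at this
  omega

lemma Matrix.linearIndependent_cols_of_unitriangular {R : Type*} [CommRing R] [IsDomain R]
    {n m : ℕ} (h : m ≤ n) {Z : Matrix (Fin n) (Fin m) R}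
    (hdiag : ∀ k, Z (Fin.castLE h k) k = 1)
    (hupper : ∀ (i : Fin n) (k : Fin m), (i : ℕ) < k → Z i k = 0) :
    LinearIndependent R fun k => Zᵀ k := by
  have hdet : (Z.submatrix (Fin.castLE h) id).det = 1 := by
    rw [Matrix.det_of_isLowerTriangular (Z.submatrix (Fin.castLE h) id) fun i k hik =>
      hupper (Fin.castLE h i) k (Fin.lt_def.mp (OrderDual.toDual_lt_toDual.mp hik))]
    simp [hdiag]
  exact (Matrix.linearIndependent_cols_of_det_ne_zero (hdet ▸ one_ne_zero)).of_comp
    (LinearMap.funLeft R R (Fin.castLE h))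

lemma AffinelySpans.isGaleMatrix_of_unitriangular {p : Fin n → EuclideanSpace ℝ (Fin r)}
    (hspan : AffinelySpans p) {Z : Matrix (Fin n) (Fin (n - r - 1)) ℝ}
    (hZ : extConfig p * Z = 0) (hdiag : ∀ k, Z (Fin.castLE (by omega) k) k = 1)
    (hupper : ∀ (i : Fin n) (k : Fin (n - r - 1)), (i : ℕ) < k → Z i k = 0) :
    IsGaleMatrix p Z := by
  have hli := Matrix.linearIndependent_cols_of_unitriangular _ hdiag hupper
  have hle :
      Submodule.span ℝ (Set.range fun k => Zᵀ k) ≤ LinearMap.ker (extConfig p).mulVecLin := by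
    rw [Submodule.span_le]
    rintro _ ⟨k, rfl⟩
    exact funext fun a => congrFun (congrFun hZ a) k
  have heq := Submodule.eq_of_le_of_finrank_le hle (by
    rw [finrank_span_eq_card hli, hspan.finrank_ker_mulVecLin_extConfig, Fintype.card_fin])
  exact ⟨hZ, hli, fun x hx => heq ▸ hx⟩

theorem stmt14_connected_chordal_gives_propertyA_gale_general
    {n r : ℕ} (G : SimpleGraph (Fin n)) (p : Fin n → EuclideanSpace ℝ (Fin r))
    (hspan : AffinelySpans p) (hgp : InGeneralPosition p)
    (hpeo : IsNatPEO G)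
    (hcon : IsKVertexConnected (r + 1) G) :
    ∃ Z : Matrix (Fin n) (Fin (n - r - 1)) ℝ, IsGaleMatrix p Z ∧ PropertyA G Z := by
  have hle : n - r - 1 ≤ n := by omega
  have hcol (k : Fin (n - r - 1)) : ∃ z : Fin n → ℝ, extConfig p *ᵥ z = 0 ∧
      z (Fin.castLE hle k) = 1 ∧ ∀ i ∉ insert (Fin.castLE hle k)
        (upperNeighborFinset G (Fin.castLE hle k)), z i = 0 :=
    hgp.exists_mulVec_extConfig_eq_zero
      (hpeo.le_card_upperNeighborFinset hcon (by rw [Fin.card_Ioi, Fin.val_castLE]; omega))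
      (by simp [upperNeighborFinset])
  choose z hz hdiag hsupp using hcol
  let Z : Matrix (Fin n) (Fin (n - r - 1)) ℝ := Matrix.of fun i k => z k i
  have hupper (i : Fin n) (k : Fin (n - r - 1)) (hik : (i : ℕ) < k) : Z i k = 0 :=
    hsupp k i (by simp [upperNeighborFinset, Fin.ext_iff, Fin.lt_def]; omega)
  refine ⟨Z, hspan.isGaleMatrix_of_unitriangular ?_ hdiag hupper,
    fun i hi => hdiag ⟨i, hi⟩, hupper, fun i k hki hadj => hsupp k i ?_⟩
  · ext a k
    exact congrFun (hz k) a
  · have hadj' : ¬ G.Adj (Fin.castLE hle k) i := fun h => hadj h.symm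
    simp [upperNeighborFinset, Fin.ext_iff, hadj']
    omega

/-- A chordal bar framework `G(p)` on `n` vertices in general position in
`ℝ^r` (with `1, ..., n` a PEO of `G` and `r̄ = n - r - 1 ≥ 1`) whose graph is
`(r+1)`-vertex connected admits a Gale matrix `Z` satisfying Property (A). -/
theorem stmt14_connected_chordal_gives_propertyA_gale
    {n r : ℕ} (G : SimpleGraph (Fin n)) (p : Fin n → EuclideanSpace ℝ (Fin r))
    (hconn : G.Connected) (hspan : AffinelySpans p) (hgp : InGeneralPosition p)
    (hchord : IsChordal G) (hpeo : IsNatPEO G) (hr : 1 ≤ n - r - 1)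
    (hcon : IsKVertexConnected (r + 1) G) :
    ∃ Z : Matrix (Fin n) (Fin (n - r - 1)) ℝ, IsGaleMatrix p Z ∧ PropertyA G Z :=
  stmt14_connected_chordal_gives_propertyA_gale_general G p hspan hgp hpeo hcon

end
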